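/- The graph G_11 — an 8-cycle u_1...u_8 together with four vertices w_1, w_2, w_3, w_4 where w_i is adjacent to u_{2i-1} and u_{2i}, and additionally w_1 w_3 and w_2 w_4 are edges — admits no (1,1,3,3,3)-packing coloring. -/
import Mathlib


open SimpleGraph

/-- `c` is an `S`-packing coloring of `G` for the sequence `s`: vertices sharing
color `i` are at distance greater than `s i`. -/
def IsPackingColoring {V : Type*} (G : SimpleGraph V) {m : ℕ} (s : Fin m → ℕ)
    (c : V → Fin m) : Prop :=
  ∀ u v : V, u ≠ v → c u = c v → G.Reachable u v → s (c u) < G.dist u v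
/-- The graph 𝒢₁₁: an 8-cycle u₁…u₈ (vertices 0–7) together with w₁,w₂,w₃,w₄
(vertices 8–11), where wᵢ is adjacent to u₂ᵢ₋₁ and u₂ᵢ, plus edges w₁w₃, w₂w₄. -/
def G11 : SimpleGraph (Fin 12) :=
  SimpleGraph.fromRel (fun u v =>
    (u.val, v.val) ∈ [(0, 1), (1, 2), (2, 3), (3, 4), (4, 5), (5, 6), (6, 7),
      (7, 0), (8, 0), (8, 1), (9, 2), (9, 3), (10, 4), (10, 5), (11, 6), (11, 7),
      (8, 10), (9, 11)])

instance : DecidableRel G11.Adj := fun u v =>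
  decidable_of_iff _ (SimpleGraph.fromRel_adj _ u v).symm

/-- Every pair of distinct vertices of `G11` is joined by a walk of length at most 3. -/
lemma G11.key : ∀ u v : Fin 12, u ≠ v → G11.Adj u v ∨ (∃ a, G11.Adj u a ∧ G11.Adj a v) ∨
    (∃ a b, G11.Adj u a ∧ G11.Adj a b ∧ G11.Adj b v) := by decide

/-- `G11` is connected with diameter at most 3. -/
lemma G11.dist_le_three : ∀ u v : Fin 12, u ≠ v → G11.Reachable u v ∧ G11.dist u v ≤ 3 := by
  intro u v huv
  rcases G11.key u v huv with h | ⟨a, h1, h2⟩ | ⟨a, b, h1, h2, h3⟩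
  · exact ⟨h.reachable, le_trans (SimpleGraph.dist_le h.toWalk) (by simp)⟩
  · refine ⟨⟨(h1.toWalk.append h2.toWalk)⟩, le_trans (SimpleGraph.dist_le
      (h1.toWalk.append h2.toWalk)) (by simp)⟩
  · refine ⟨⟨(h1.toWalk.append (h2.toWalk.append h3.toWalk))⟩, le_trans (SimpleGraph.dist_le
      (h1.toWalk.append (h2.toWalk.append h3.toWalk))) (by simp)⟩

/-- In any triangle of `G11`, some vertex gets a color among `{2, 3, 4}`. -/
lemma G11.tri (c : Fin 12 → Fin 5) (h : IsPackingColoring G11 ![1,1,3,3,3] c)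
    (a b x : Fin 12) (hab : G11.Adj a b) (hax : G11.Adj a x) (hbx : G11.Adj b x) :
    2 ≤ (c a).val ∨ 2 ≤ (c b).val ∨ 2 ≤ (c x).val := by
  by_contra hc
  push_neg at hc
  obtain ⟨h1, h2, h3⟩ := hc
  have key : ∀ p q : Fin 12, G11.Adj p q → (c p).val < 2 → c p ≠ c q := by
    intro p q hpq hle heq
    have := h p q hpq.ne heq hpq.reachable
    rw [SimpleGraph.dist_eq_one_iff_adj.mpr hpq] at this
    have h' : c p = 0 ∨ c p = 1 := by omega
    rcases h' with h' | h' <;> simp [h'] at this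
  have e1 := key a b hab h1
  have e2 := key a x hax h1
  have e3 := key b x hbx h2
  have : (c a).val ≠ (c b).val ∧ (c a).val ≠ (c x).val ∧ (c b).val ≠ (c x).val :=
    ⟨fun h' => e1 (Fin.ext h'), fun h' => e2 (Fin.ext h'), fun h' => e3 (Fin.ext h')⟩
  omega

/-- 𝒢₁₁ admits no (1,1,3,3,3)-packing coloring. -/
theorem stmt_19 : ¬ ∃ c : Fin 12 → Fin 5, IsPackingColoring G11 ![1, 1, 3, 3, 3] c := by
  rintro ⟨c, h⟩
  have t1 := G11.tri c h 0 1 8 (by decide) (by decide) (by decide)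
  have t2 := G11.tri c h 2 3 9 (by decide) (by decide) (by decide)
  have t3 := G11.tri c h 4 5 10 (by decide) (by decide) (by decide)
  have t4 := G11.tri c h 6 7 11 (by decide) (by decide) (by decide)
  have main : ∀ u v : Fin 12, u ≠ v → 2 ≤ (c u).val → (c u).val ≠ (c v).val := by
    intro u v huv h2 heq
    obtain ⟨hr, hd⟩ := G11.dist_le_three u v huv
    have := h u v huv (Fin.ext heq) hr
    have hs : (![1,1,3,3,3] : Fin 5 → ℕ) (c u) = 3 := by
      have h' : c u = 2 ∨ c u = 3 ∨ c u = 4 := by omega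
      rcases h' with h' | h' | h' <;> simp [h']
    omega
  obtain ⟨v1, hm1, hv1⟩ : ∃ v ∈ ([0,1,8] : List (Fin 12)), 2 ≤ (c v).val := by
    rcases t1 with h' | h' | h'
    exacts [⟨0, by decide, h'⟩, ⟨1, by decide, h'⟩, ⟨8, by decide, h'⟩]
  obtain ⟨v2, hm2, hv2⟩ : ∃ v ∈ ([2,3,9] : List (Fin 12)), 2 ≤ (c v).val := by
    rcases t2 with h' | h' | h'
    exacts [⟨2, by decide, h'⟩, ⟨3, by decide, h'⟩, ⟨9, by decide, h'⟩]
  obtain ⟨v3, hm3, hv3⟩ : ∃ v ∈ ([4,5,10] : List (Fin 12)), 2 ≤ (c v).val := by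
    rcases t3 with h' | h' | h'
    exacts [⟨4, by decide, h'⟩, ⟨5, by decide, h'⟩, ⟨10, by decide, h'⟩]
  obtain ⟨v4, hm4, hv4⟩ : ∃ v ∈ ([6,7,11] : List (Fin 12)), 2 ≤ (c v).val := by
    rcases t4 with h' | h' | h'
    exacts [⟨6, by decide, h'⟩, ⟨7, by decide, h'⟩, ⟨11, by decide, h'⟩]
  have disj : ∀ x ∈ ([0,1,8] : List (Fin 12)), (∀ y ∈ ([2,3,9] : List (Fin 12)), x ≠ y) ∧
      (∀ y ∈ ([4,5,10] : List (Fin 12)), x ≠ y) ∧ (∀ y ∈ ([6,7,11] : List (Fin 12)), x ≠ y) := by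
    decide
  have disj2 : ∀ x ∈ ([2,3,9] : List (Fin 12)), (∀ y ∈ ([4,5,10] : List (Fin 12)), x ≠ y) ∧
      (∀ y ∈ ([6,7,11] : List (Fin 12)), x ≠ y) := by decide
  have disj3 : ∀ x ∈ ([4,5,10] : List (Fin 12)), ∀ y ∈ ([6,7,11] : List (Fin 12)), x ≠ y := by
    decide
  have n12 := main v1 v2 ((disj v1 hm1).1 v2 hm2) hv1
  have n13 := main v1 v3 ((disj v1 hm1).2.1 v3 hm3) hv1
  have n14 := main v1 v4 ((disj v1 hm1).2.2 v4 hm4) hv1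
  have n23 := main v2 v3 ((disj2 v2 hm2).1 v3 hm3) hv2
  have n24 := main v2 v4 ((disj2 v2 hm2).2 v4 hm4) hv2
  have n34 := main v3 v4 (disj3 v3 hm3 v4 hm4) hv3
  have b1 := (c v1).isLt
  have b2 := (c v2).isLt
  have b3 := (c v3).isLt
  have b4 := (c v4).isLt
  omega
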